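/- Let T be a cluster-tilting object in C. Then C(T) = C, i.e. every object X of C admits a triangle T₁ → T₀ → X → ΣT₁ with T₀, T₁ ∈ add T. Consequently, the functor Hom_C(T, −) induces an equivalence C/add ΣT → mod End_C(T)^op, where C/add ΣT is the quotient of C by the ideal of maps factoring through an object of add ΣT. -/

import Mathlib

/-!
Common setup: `C` is a Hom-finite, Krull-Schmidt (= idempotent complete, given
Hom-finiteness over a field), `k`-linear triangulated category with suspension
functor `Σ = shiftFunctor C (1 : ℤ)`, and `T` is a rigid object of `C`.
-/

noncomputable section

open CategoryTheory CategoryTheory.Limits CategoryTheory.Pretriangulated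

universe v u

namespace PaperBM

variable {C : Type u} [Category.{v} C] [Preadditive C] [HasZeroObject C]
  [HasShift C ℤ] [∀ n : ℤ, (shiftFunctor C n).Additive] [Pretriangulated C]
  [HasFiniteBiproducts C]

/-- `X` lies in `add T`: it is a direct summand of a finite direct sum of copies of `T`. -/
def memAdd (T X : C) : Prop :=
  ∃ (n : ℕ) (s : X ⟶ ⨁ (fun _ : Fin n => T)) (r : (⨁ fun _ : Fin n => T) ⟶ X), s ≫ r = 𝟙 X

/-- `T` is rigid: `Hom_C(T, ΣT) = 0`. -/
def IsRigidObj (T : C) : Prop := ∀ f : T ⟶ (shiftFunctor C (1 : ℤ)).obj T, f = 0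

/-- `Y ∈ T^⊥`, i.e. `Hom_C(X, ΣY) = 0` for all `X ∈ add T`. -/
def memTperp (T Y : C) : Prop :=
  ∀ (X : C), memAdd T X → ∀ f : X ⟶ (shiftFunctor C (1 : ℤ)).obj Y, f = 0

/-- `Y ∈ ⊥T`, i.e. `Hom_C(Y, ΣX) = 0` for all `X ∈ add T`. -/
def memPerpT (T Y : C) : Prop :=
  ∀ (X : C), memAdd T X → ∀ f : Y ⟶ (shiftFunctor C (1 : ℤ)).obj X, f = 0

/-- `Y ∈ ΣT^⊥`, the image of `T^⊥` under the suspension `Σ`. -/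
def memSigmaTperp (T Y : C) : Prop :=
  ∃ Z : C, memTperp T Z ∧ Nonempty (Y ≅ (shiftFunctor C (1 : ℤ)).obj Z)

/-- The map `f` factors through an object belonging to the class `P` of objects. -/
def FactorsThru (P : C → Prop) {A B : C} (f : A ⟶ B) : Prop :=
  ∃ (Z : C) (g : A ⟶ Z) (h : Z ⟶ B), P Z ∧ g ≫ h = f

/-- The class `S̃` of maps `f : X ⟶ Y` such that in a completion
`Σ⁻¹Z →h X →f Y →g Z` of `f` to a triangle (where `A` plays the role of `Σ⁻¹Z`,
so that `Z = ΣA`), both `g` and `h` factor through an object of `ΣT^⊥`. -/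
def Stilde (T : C) : MorphismProperty C := fun X Y f =>
  ∃ (A : C) (h : A ⟶ X) (g : Y ⟶ (shiftFunctor C (1 : ℤ)).obj A),
    (Triangle.mk h f g ∈ distTriang C) ∧
    FactorsThru (memSigmaTperp T) g ∧ FactorsThru (memSigmaTperp T) h

/-- The class `S` of maps `f : X ⟶ Y` such that in a completion
`Σ⁻¹Z →h X →f Y →g Z` of `f` to a triangle (where `A` plays the role of `Σ⁻¹Z`,
so that `Z = ΣA`), `g` factors through an object of `ΣT^⊥` and `Σ⁻¹Z ∈ ΣT^⊥`. -/
def Sclass (T : C) : MorphismProperty C := fun X Y f =>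
  ∃ (A : C) (h : A ⟶ X) (g : Y ⟶ (shiftFunctor C (1 : ℤ)).obj A),
    (Triangle.mk h f g ∈ distTriang C) ∧
    FactorsThru (memSigmaTperp T) g ∧ memSigmaTperp T A

/-- `X ∈ C(T)`: there is a triangle `T₁ → T₀ → X → ΣT₁` with `T₀, T₁ ∈ add T`. -/
def memCT (T X : C) : Prop :=
  ∃ (T₁ T₀ : C) (a : T₁ ⟶ T₀) (b : T₀ ⟶ X) (c : X ⟶ (shiftFunctor C (1 : ℤ)).obj T₁),
    memAdd T T₁ ∧ memAdd T T₀ ∧ (Triangle.mk a b c ∈ distTriang C)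

/-- `f : X₀ ⟶ Y` is a right `P`-approximation of `Y`. -/
def IsRightApprox (P : C → Prop) {X₀ Y : C} (f : X₀ ⟶ Y) : Prop :=
  P X₀ ∧ ∀ (W : C), P W → ∀ g : W ⟶ Y, ∃ g' : W ⟶ X₀, g' ≫ f = g

/-- `f : Y ⟶ X₀` is a left `P`-approximation of `Y`. -/
def IsLeftApprox (P : C → Prop) {Y X₀ : C} (f : Y ⟶ X₀) : Prop :=
  P X₀ ∧ ∀ (W : C), P W → ∀ g : Y ⟶ W, ∃ g' : X₀ ⟶ W, f ≫ g' = g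

/-- The map `f : X₀ ⟶ Y` is right minimal. -/
def IsRightMinimal {X₀ Y : C} (f : X₀ ⟶ Y) : Prop :=
  ∀ g : X₀ ⟶ X₀, g ≫ f = f → IsIso g

/-- The functor `H = Hom_C(T, -) : C ⥤ Mod End_C(T)ᵒᵖ`.  Here, with Mathlib's
conventions, the endomorphism ring `End (Opposite.op T)` of `T` viewed in `Cᵒᵖ` plays
the role of `End_C(T)ᵒᵖ`, so that each `Hom_C(T, X)` is a left module over it. -/
instance moduleEndOpLeft {X : C} {Y : C} : Module (End (Opposite.op X)) (X ⟶ Y) where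
  smul := fun r f => r.unop ≫ f
  smul_zero := fun _ => Limits.comp_zero
  zero_smul := fun _ => Limits.zero_comp
  one_smul := Category.id_comp
  mul_smul := fun _ _ _ => Category.assoc _ _ _
  smul_add := fun _ _ _ => Preadditive.comp_add _ _ _ _ _ _
  add_smul := fun _ _ _ => Preadditive.add_comp _ _ _ _ _ _

abbrev homFunctor (T : C) : C ⥤ ModuleCat.{v} (End (Opposite.op T)) where
  obj Y := ModuleCat.of _ (T ⟶ Y)
  map f := ModuleCat.ofHom
    { toFun := fun g => g ≫ f
      map_add' := fun _ _ => Preadditive.add_comp _ _ _ _ _ _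
      map_smul' := fun _ _ => Category.assoc _ _ _ }

/-- The predicate on `End_C(T)ᵒᵖ`-modules of being finite-dimensional (equivalently,
since `End_C(T)` is a finite-dimensional algebra, finitely generated). -/
abbrev isFinDim (T : C) : ModuleCat.{v} (End (Opposite.op T)) → Prop :=
  fun M => Module.Finite (End (Opposite.op T)) M

/-- The category `mod End_C(T)ᵒᵖ` of finite-dimensional `End_C(T)ᵒᵖ`-modules. -/
abbrev fdMod (T : C) := ObjectProperty.FullSubcategory (isFinDim T)

/-- The ideal relation on `C(T)` of maps factoring through an object of `ΣT^⊥`. -/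
def homRelCT (T : C) : HomRel (ObjectProperty.FullSubcategory (memCT T)) :=
  fun A B f g => FactorsThru (memSigmaTperp T) ((f.hom - g.hom : A.obj ⟶ B.obj))

/-- The ideal relation on `C(T)` of maps factoring through an object of `add ΣT`. -/
def homRelCTadd (T : C) : HomRel (ObjectProperty.FullSubcategory (memCT T)) :=
  fun A B f g => FactorsThru (memAdd ((shiftFunctor C (1 : ℤ)).obj T)) ((f.hom - g.hom : A.obj ⟶ B.obj))

/-- The ideal relation on `C` of maps factoring through an object of `add ΣT`. -/
def homRelAdd (T : C) : HomRel C :=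
  fun A B f g => FactorsThru (memAdd ((shiftFunctor C (1 : ℤ)).obj T)) (f - g)

end PaperBM


/-!
Let `X` be any object. A `k`-basis of `Hom(T, X)` gives a map `f : T₀ → X` with `T₀ ∈ add T`
through which every map `T → X` factors; complete it to a triangle `T₁ → T₀ → X → ΣT₁` with
last map `h`. A map `T → ΣT₁` dies in `ΣT₀` because `Hom(T, ΣT₀) = 0` by rigidity, so it
is `y ≫ h` for some `y : T → X`; but `y` factors through `f` and `f ≫ h = 0`. Hence
`Hom(T, ΣT₁) = 0`, so `T₁ ∈ add T` by cluster-tilting, and `X ∈ C(T)`.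

With these triangles, `H = Hom(T, -)` kills `g : X → Y` iff `g` factors through `add ΣT`:
if `H g = 0` then `g` vanishes on `T₀`, so it factors through `X → ΣT₁`. `H` is full, since
a module map `H X → H Y` is induced by a map `T₀ → Y`, which vanishes on `T₁` and hence
descends to `X`. For essential surjectivity, present a finitely generated module as
`H(Tᵐ) → H(Tⁿ) → M → 0` (the kernel is finitely generated, being finite-dimensional over `k`),
realise the presentation as `H α` and take `X = cone α`: `H(Tⁿ) → H X` is onto by rigidity.
-/

namespace PaperBM

open Opposite

section Additive

variable {C : Type u} [Category.{v} C] [Preadditive C] [HasFiniteBiproducts C]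

lemma memAdd_self (T : C) : memAdd T T :=
  ⟨1, biproduct.ι (fun _ : Fin 1 => T) 0, biproduct.π _ 0, biproduct.ι_π_self _ _⟩

lemma memAdd_biproduct (T : C) (n : ℕ) : memAdd T (⨁ fun _ : Fin n => T) :=
  ⟨n, 𝟙 _, 𝟙 _, Category.id_comp _⟩

lemma memAdd.eq_zero_of_comp_left {T X Y : C} (hX : memAdd T X) {f : X ⟶ Y}
    (hf : ∀ t : T ⟶ X, t ≫ f = 0) : f = 0 := by
  obtain ⟨n, s, r, hsr⟩ := hX
  have hrf : r ≫ f = 0 := biproduct.hom_ext' _ _ fun i => by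
    simpa using hf (biproduct.ι (fun _ : Fin n => T) i ≫ r)
  rw [← Category.id_comp f, ← hsr, Category.assoc, hrf, comp_zero]

lemma memAdd.eq_zero_of_comp_right {T X Y : C} (hY : memAdd T Y) {f : X ⟶ Y}
    (hf : ∀ u : Y ⟶ T, f ≫ u = 0) : f = 0 := by
  obtain ⟨n, s, r, hsr⟩ := hY
  have hfs : f ≫ s = 0 := biproduct.hom_ext _ _ fun i => by
    simpa using hf (s ≫ biproduct.π (fun _ : Fin n => T) i)
  rw [← Category.comp_id f, ← hsr, ← Category.assoc, hfs, zero_comp]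

lemma exists_biproduct_precover (k : Type*) [Field k] [Linear k C]
    [∀ X Y : C, FiniteDimensional k (X ⟶ Y)] (T X : C) :
    ∃ (n : ℕ) (f : (⨁ fun _ : Fin n => T) ⟶ X),
      ∀ g : T ⟶ X, ∃ s : T ⟶ ⨁ fun _ : Fin n => T, s ≫ f = g := by
  let b := Module.finBasis k (T ⟶ X)
  refine ⟨_, biproduct.desc fun i => b i, fun g => ⟨biproduct.lift fun i => b.repr g i • 𝟙 T, ?_⟩⟩
  rw [biproduct.lift_desc]
  simpa only [Linear.smul_comp, Category.id_comp] using b.sum_repr g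

end Additive

section Modules

variable {C : Type u} [Category.{v} C] [Preadditive C]

-- The `show` makes the `End (op T)`-action of the frozen definitions visible to instance search.
lemma op_smul_id_smul {k : Type*} [Semiring k] [Linear k C] {T X : C} (c : k) (f : T ⟶ X) :
    (show End (op T) from (c • 𝟙 T).op) • f = c • f := by
  change (c • 𝟙 T) ≫ f = c • f
  rw [Linear.smul_comp, Category.id_comp]

lemma submodule_hom_fg (k : Type*) [Field k] [Linear k C] {T X : C}
    [FiniteDimensional k (T ⟶ X)] (N : Submodule (End (op T)) (T ⟶ X)) : N.FG := by
  let Nk : Submodule k (T ⟶ X) :=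
    { carrier := N
      add_mem' := N.add_mem
      zero_mem' := N.zero_mem
      smul_mem' := fun c x hx => op_smul_id_smul c x ▸ N.smul_mem _ hx }
  obtain ⟨s, hs⟩ := IsNoetherian.noetherian Nk
  refine ⟨s, le_antisymm (Submodule.span_le.2 fun x hx => ?_) fun x hx => ?_⟩
  · exact (hs ▸ Submodule.subset_span hx : x ∈ Nk)
  · have hx' : x ∈ Submodule.span k (s : Set (T ⟶ X)) := hs ▸ hx
    clear hx
    induction hx' using Submodule.span_induction with
    | mem y hy => exact Submodule.subset_span hy
    | zero => exact zero_mem _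
    | add y z _ _ hy hz => exact add_mem hy hz
    | smul c y _ hy => exact op_smul_id_smul c y ▸ Submodule.smul_mem _ _ hy

lemma finite_hom (k : Type*) [Field k] [Linear k C] [∀ X Y : C, FiniteDimensional k (X ⟶ Y)]
    (T X : C) : Module.Finite (End (op T)) (T ⟶ X) :=
  ⟨submodule_hom_fg k ⊤⟩

def homFunctorFd (k : Type*) [Field k] [Linear k C] [∀ X Y : C, FiniteDimensional k (X ⟶ Y)]
    (T : C) : C ⥤ fdMod T :=
  ObjectProperty.lift _ (homFunctor T) (finite_hom k T)

lemma linearMap_apply_comp {T X Y : C} (φ : (T ⟶ X) →ₗ[End (op T)] (T ⟶ Y)) (a : T ⟶ T)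
    (x : T ⟶ X) : φ (a ≫ x) = a ≫ φ x :=
  φ.map_smul a.op x

variable [HasFiniteBiproducts C]

def biproductHomEquiv (T : C) (n : ℕ) :
    (T ⟶ ⨁ fun _ : Fin n => T) ≃ₗ[End (op T)] (Fin n → End (op T)) where
  toFun t i := (t ≫ biproduct.π _ i).op
  invFun g := biproduct.lift fun i => (g i).unop
  map_add' _ _ := funext fun _ => congrArg Quiver.Hom.op (Preadditive.add_comp _ _ _ _ _ _)
  map_smul' _ _ := funext fun _ => congrArg Quiver.Hom.op (Category.assoc _ _ _)
  left_inv t := by ext; simp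
  right_inv g := by ext; simp

lemma exists_surjective_linearMap_biproduct (T : C) (M : Type*) [AddCommGroup M]
    [Module (End (op T)) M] [Module.Finite (End (op T)) M] :
    ∃ (n : ℕ) (p : (T ⟶ ⨁ fun _ : Fin n => T) →ₗ[End (op T)] M), Function.Surjective p := by
  obtain ⟨n, p, hp⟩ := Module.Finite.exists_fin' (End (op T)) M
  exact ⟨n, p ∘ₗ (biproductHomEquiv T n).toLinearMap, hp.comp (biproductHomEquiv T n).surjective⟩

lemma exists_hom_of_linearMap_biproduct {T Y : C} {n : ℕ}
    (φ : (T ⟶ ⨁ fun _ : Fin n => T) →ₗ[End (op T)] (T ⟶ Y)) :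
    ∃ β : (⨁ fun _ : Fin n => T) ⟶ Y, ∀ t, φ t = t ≫ β := by
  refine ⟨biproduct.desc fun i => φ (biproduct.ι (fun _ : Fin n => T) i), fun t => ?_⟩
  conv_lhs => rw [← Category.comp_id t, ← biproduct.total, Preadditive.comp_sum]
  simp only [map_sum, ← Category.assoc, linearMap_apply_comp]
  rw [← biproduct.lift_desc]
  congr 1
  ext; simp

lemma memAdd.exists_hom_of_linearMap {T W Y : C} (hW : memAdd T W)
    (φ : (T ⟶ W) →ₗ[End (op T)] (T ⟶ Y)) : ∃ β : W ⟶ Y, ∀ t, φ t = t ≫ β := by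
  obtain ⟨n, s, r, hsr⟩ := hW
  obtain ⟨β, hβ⟩ := exists_hom_of_linearMap_biproduct (φ ∘ₗ ((homFunctor T).map r).hom)
  refine ⟨s ≫ β, fun t => ?_⟩
  simpa [hsr] using hβ (t ≫ s)

end Modules

section Shift

variable {C : Type u} [Category.{v} C] [Preadditive C] [HasShift C ℤ] [HasFiniteBiproducts C]

lemma IsRigidObj.hom_eq_zero {T X Z : C} (hT : IsRigidObj T) (hX : memAdd T X)
    (hZ : memAdd (T⟦(1 : ℤ)⟧) Z) (f : X ⟶ Z) : f = 0 :=
  hX.eq_zero_of_comp_left fun _ => hZ.eq_zero_of_comp_right fun _ => hT _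

lemma IsRigidObj.comp_eq_zero_of_factorsThru {T X Y : C} (hT : IsRigidObj T) {f : X ⟶ Y}
    (hf : FactorsThru (memAdd (T⟦(1 : ℤ)⟧)) f) (t : T ⟶ X) : t ≫ f = 0 := by
  obtain ⟨Z, g, h, hZ, rfl⟩ := hf
  rw [← Category.assoc, hT.hom_eq_zero (memAdd_self T) hZ (t ≫ g), zero_comp]

lemma IsRigidObj.homFunctorFd_map_eq {k : Type*} [Field k] [Linear k C]
    [∀ X Y : C, FiniteDimensional k (X ⟶ Y)] {T X Y : C} (hT : IsRigidObj T) {f g : X ⟶ Y}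
    (h : homRelAdd T f g) : (homFunctorFd k T).map f = (homFunctorFd k T).map g := by
  ext t
  rw [← sub_eq_zero]
  exact (Preadditive.comp_sub _ _ _).symm.trans (hT.comp_eq_zero_of_factorsThru h t)

def quotientHomFunctor (k : Type*) [Field k] [Linear k C] [∀ X Y : C, FiniteDimensional k (X ⟶ Y)]
    {T : C} (hT : IsRigidObj T) :
    CategoryTheory.Quotient (homRelAdd T) ⥤ fdMod T :=
  CategoryTheory.Quotient.lift _ (homFunctorFd k T) fun _ _ _ _ => hT.homFunctorFd_map_eq

variable [∀ n : ℤ, (shiftFunctor C n).Additive]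

lemma memAdd.shift {T X : C} (h : memAdd T X) : memAdd (T⟦(1 : ℤ)⟧) (X⟦(1 : ℤ)⟧) := by
  obtain ⟨n, s, r, hsr⟩ := h
  let e := (shiftFunctor C (1 : ℤ)).mapBiproduct (fun _ : Fin n => T)
  refine ⟨n, s⟦(1 : ℤ)⟧' ≫ e.hom, e.inv ≫ r⟦(1 : ℤ)⟧', ?_⟩
  simp [← Functor.map_comp, hsr]

end Shift

variable {C : Type u} [Category.{v} C] [Preadditive C] [HasZeroObject C]
  [HasShift C ℤ] [∀ n : ℤ, (shiftFunctor C n).Additive] [Pretriangulated C]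

lemma ker_homFunctor_map_mor₂ {T A B X : C} {a : A ⟶ B} {b : B ⟶ X} {c : X ⟶ A⟦(1 : ℤ)⟧}
    (hτ : Triangle.mk a b c ∈ distTriang C) :
    LinearMap.ker ((homFunctor T).map b).hom = LinearMap.range ((homFunctor T).map a).hom := by
  have hab : a ≫ b = 0 := comp_distTriang_mor_zero₁₂ _ hτ
  ext t
  constructor
  · intro ht
    obtain ⟨y, hy⟩ := Triangle.coyoneda_exact₂ _ hτ t ht
    exact ⟨y, hy.symm⟩
  · rintro ⟨y, rfl⟩
    change (y ≫ a) ≫ b = 0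
    rw [Category.assoc, hab, comp_zero]

variable [HasFiniteBiproducts C]

lemma IsRigidObj.exists_comp_eq_of_distTriang {T A B X : C} (hT : IsRigidObj T)
    (hA : memAdd T A) {a : A ⟶ B} {b : B ⟶ X} {c : X ⟶ A⟦(1 : ℤ)⟧}
    (hτ : Triangle.mk a b c ∈ distTriang C) (t : T ⟶ X) : ∃ y : T ⟶ B, y ≫ b = t := by
  obtain ⟨y, hy⟩ := Triangle.coyoneda_exact₃ _ hτ t (hT.hom_eq_zero (memAdd_self T) hA.shift _)
  exact ⟨y, hy.symm⟩

lemma memCT_of_isClusterTilting (k : Type*) [Field k] [Linear k C]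
    [∀ X Y : C, FiniteDimensional k (X ⟶ Y)] {T : C} (hT : IsRigidObj T)
    (hct : ∀ X : C, (∀ f : T ⟶ X⟦(1 : ℤ)⟧, f = 0) → memAdd T X) (X : C) : memCT T X := by
  obtain ⟨n, f, hf⟩ := exists_biproduct_precover k T X
  obtain ⟨A, a, h, hτ⟩ := distinguished_cocone_triangle₁ f
  refine ⟨A, _, a, f, h, hct A fun φ => ?_, memAdd_biproduct T n, hτ⟩
  obtain ⟨y, rfl⟩ := Triangle.coyoneda_exact₁ _ hτ φ
    (hT.hom_eq_zero (memAdd_self T) (memAdd_biproduct T n).shift _)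
  obtain ⟨s, rfl⟩ := hf y
  have hfh : f ≫ h = 0 := comp_distTriang_mor_zero₂₃ _ hτ
  exact (Category.assoc s f h).trans (by rw [hfh, comp_zero])

lemma IsRigidObj.exists_hom_of_linearMap {T X Y : C} (hT : IsRigidObj T) (hX : memCT T X)
    (φ : (T ⟶ X) →ₗ[End (op T)] (T ⟶ Y)) : ∃ f : X ⟶ Y, ∀ t, φ t = t ≫ f := by
  obtain ⟨T₁, T₀, a, b, c, h₁, h₀, hτ⟩ := hX
  obtain ⟨β, hβ⟩ := h₀.exists_hom_of_linearMap (φ ∘ₗ ((homFunctor T).map b).hom)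
  have hab : a ≫ b = 0 := comp_distTriang_mor_zero₁₂ _ hτ
  have haβ : a ≫ β = 0 := h₁.eq_zero_of_comp_left fun t => by
    rw [← Category.assoc, ← hβ]
    change φ ((t ≫ a) ≫ b) = 0
    rw [Category.assoc, hab, comp_zero, map_zero]
  obtain ⟨f, rfl⟩ := Triangle.yoneda_exact₂ _ hτ β haβ
  refine ⟨f, fun t => ?_⟩
  obtain ⟨y, rfl⟩ := hT.exists_comp_eq_of_distTriang h₁ hτ t
  exact (hβ y).trans (Category.assoc _ _ _).symm

lemma memCT.factorsThru_of_comp_eq_zero {T X Y : C} (hX : memCT T X) {f : X ⟶ Y}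
    (hf : ∀ t : T ⟶ X, t ≫ f = 0) : FactorsThru (memAdd (T⟦(1 : ℤ)⟧)) f := by
  obtain ⟨T₁, T₀, a, b, c, h₁, h₀, hτ⟩ := hX
  have hbf : b ≫ f = 0 := h₀.eq_zero_of_comp_left fun t => by simpa using hf (t ≫ b)
  obtain ⟨g, hg⟩ := Triangle.yoneda_exact₃ _ hτ f hbf
  exact ⟨_, c, g, h₁.shift, hg.symm⟩

lemma IsRigidObj.exists_linearEquiv_homFunctor_obj (k : Type*) [Field k] [Linear k C]
    [∀ X Y : C, FiniteDimensional k (X ⟶ Y)] {T : C} (hT : IsRigidObj T) (M : Type v)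
    [AddCommGroup M] [Module (End (op T)) M] [Module.Finite (End (op T)) M] :
    ∃ X : C, Nonempty ((T ⟶ X) ≃ₗ[End (op T)] M) := by
  obtain ⟨n, p, hp⟩ := exists_surjective_linearMap_biproduct T M
  have : Module.Finite (End (op T)) (LinearMap.ker p) :=
    Module.Finite.iff_fg.2 (submodule_hom_fg k _)
  obtain ⟨m, q, hq⟩ := exists_surjective_linearMap_biproduct T (LinearMap.ker p)
  obtain ⟨α, hα⟩ :=
    (memAdd_biproduct T m).exists_hom_of_linearMap ((LinearMap.ker p).subtype ∘ₗ q)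
  obtain ⟨X, b, c, hτ⟩ := distinguished_cocone_triangle α
  have hb : Function.Surjective ((homFunctor T).map b).hom :=
    hT.exists_comp_eq_of_distTriang (memAdd_biproduct T m) hτ
  have hker : LinearMap.ker ((homFunctor T).map b).hom = LinearMap.ker p := by
    rw [ker_homFunctor_map_mor₂ hτ, ← (LinearMap.ker p).range_subtype,
      ← LinearMap.range_comp_of_range_eq_top _ (LinearMap.range_eq_top.2 hq)]
    exact congrArg LinearMap.range (LinearMap.ext fun t => (hα t).symm)
  exact ⟨X, ⟨(LinearMap.quotKerEquivOfSurjective _ hb).symm ≪≫ₗ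
    Submodule.quotEquivOfEq _ _ hker ≪≫ₗ LinearMap.quotKerEquivOfSurjective p hp⟩⟩

section HomFinite

variable (k : Type*) [Field k] [Linear k C] [∀ X Y : C, FiniteDimensional k (X ⟶ Y)]
  {T : C} (hT : IsRigidObj T)

lemma quotientHomFunctor_faithful (hCT : ∀ X : C, memCT T X) :
    (quotientHomFunctor k hT).Faithful where
  map_injective {X _} f g hfg := by
    obtain ⟨f, rfl⟩ := (CategoryTheory.Quotient.functor _).map_surjective f
    obtain ⟨g, rfl⟩ := (CategoryTheory.Quotient.functor _).map_surjective g
    refine CategoryTheory.Quotient.sound _ ((hCT X.as).factorsThru_of_comp_eq_zero fun t => ?_)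
    rw [Preadditive.comp_sub, sub_eq_zero]
    exact LinearMap.congr_fun (congrArg (fun φ => φ.hom.hom) hfg) t

lemma quotientHomFunctor_full (hCT : ∀ X : C, memCT T X) :
    (quotientHomFunctor k hT).Full where
  map_surjective {X _} φ := by
    obtain ⟨f, hf⟩ := hT.exists_hom_of_linearMap (hCT X.as) φ.hom.hom
    exact ⟨(CategoryTheory.Quotient.functor _).map f,
      ObjectProperty.hom_ext _ (ModuleCat.hom_ext (LinearMap.ext fun t => (hf t).symm))⟩

lemma quotientHomFunctor_essSurj : (quotientHomFunctor k hT).EssSurj where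
  mem_essImage M := by
    have : Module.Finite (End (op T)) M.obj := M.property
    obtain ⟨X, ⟨e⟩⟩ := hT.exists_linearEquiv_homFunctor_obj k M.obj
    exact ⟨(CategoryTheory.Quotient.functor _).obj X, ⟨ObjectProperty.isoMk _ e.toModuleIso⟩⟩

end HomFinite

end PaperBM

open PaperBM

/-- If `T` is a cluster-tilting object then `C(T) = C`, and consequently
`Hom_C(T, −)` induces an equivalence `C/add ΣT ≌ mod End_C(T)ᵒᵖ`. -/
theorem statement_18 {C : Type u} [Category.{v} C] [Preadditive C] [HasZeroObject C]
    [HasShift C ℤ] [∀ n : ℤ, (shiftFunctor C n).Additive] [Pretriangulated C]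
    [HasFiniteBiproducts C]
    {k : Type*} [Field k] [CategoryTheory.Linear k C]
    [∀ X Y : C, FiniteDimensional k (X ⟶ Y)] [IsIdempotentComplete C]
    (T : C) (hT : IsRigidObj T)
    (hct : ∀ X : C, (∀ f : T ⟶ (shiftFunctor C (1 : ℤ)).obj X, f = 0) → memAdd T X) :
    (∀ X : C, memCT T X) ∧
    ∃ E : CategoryTheory.Quotient (homRelAdd T) ⥤ fdMod T,
      E.IsEquivalence ∧
      CategoryTheory.Quotient.functor (homRelAdd T) ⋙ E ⋙
          ObjectProperty.ι (isFinDim T) = homFunctor T := by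
  have hCT : ∀ X : C, memCT T X := memCT_of_isClusterTilting k hT hct
  refine ⟨hCT, quotientHomFunctor k hT, ?_, rfl⟩
  exact { faithful := quotientHomFunctor_faithful k hT hCT
          full := quotientHomFunctor_full k hT hCT
          essSurj := quotientHomFunctor_essSurj k hT }
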